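/- arXiv:2404.15590 — 5 statements merged into one kernel-verified Lean document; each statement's English description precedes it below -/
import Mathlib

section
/- Let Ω be an (n+1)×(n+1) real symmetric matrix with exactly one negative eigenvalue and with Ω_{n+1,n+1} < 0. If x ∈ ℝ^{n+1} is such that the (n+1)-st entry of Ωx equals 0, then xᵀΩx ≥ 0. -/
/-!
All eigenvalues of `Ω` but one are nonnegative, so `Ω` is positive semidefinite on a hyperplane
`ker φ`. If `e` is the last basis vector, then `eᵀΩe < 0` and `e` is `Ω`-orthogonal to `x`. Were
`xᵀΩx < 0`, the form would be negative definite on the plane spanned by `e` and `x`, which meets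
`ker φ` in the nonzero vector `φ(x) e - φ(e) x`.
-/

open Matrix

namespace LinearMap.BilinForm

variable {K V : Type*} [Field K] [LinearOrder K] [IsStrictOrderedRing K]
  [AddCommGroup V] [Module K V]

theorem apply_self_nonneg_of_orthogonal_of_neg {B : LinearMap.BilinForm K V} (hB : B.IsSymm)
    (φ : V →ₗ[K] K) (hφ : ∀ w ∈ ker φ, 0 ≤ B w w) {e x : V} (he : B e e < 0)
    (hex : B e x = 0) : 0 ≤ B x x := by
  by_contra! hx
  have hφe : φ e ≠ 0 := fun h => he.not_ge (hφ e h)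
  set w := φ x • e - φ e • x
  have hw : φ w = 0 := by simp only [w, map_sub, map_smul, smul_eq_mul]; ring
  have hxe : B x e = 0 := by rw [← hB.eq]; exact hex
  have hBw : B w w = φ x ^ 2 * B e e + φ e ^ 2 * B x x := by
    simp only [w, map_sub, map_smul, LinearMap.sub_apply, LinearMap.smul_apply, smul_eq_mul,
      hex, hxe]
    ring
  have hBw_neg : B w w < 0 := by
    rw [hBw]
    nlinarith [sq_nonneg (φ x), pow_pos (abs_pos.mpr hφe) 2, sq_abs (φ e)]
  exact hBw_neg.not_ge (hφ w hw)

end LinearMap.BilinForm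

namespace Matrix.IsHermitian

variable {n : Type*} [Fintype n] [DecidableEq n] {A : Matrix n n ℝ} (hA : A.IsHermitian)

theorem dotProduct_mulVec_self_eq_sum_eigenvalues (x : n → ℝ) :
    x ⬝ᵥ A *ᵥ x =
      ∑ i, hA.eigenvalues i * (star (hA.eigenvectorUnitary : Matrix n n ℝ) *ᵥ x) i ^ 2 := by
  conv_lhs => rw [hA.spectral_theorem, Unitary.conjStarAlgAut_apply]
  rw [← mulVec_mulVec, ← mulVec_mulVec, dotProduct_mulVec, ← mulVec_transpose,
    star_eq_conjTranspose, conjTranspose_eq_transpose_of_trivial]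
  simp [dotProduct, mulVec_diagonal, sq, mul_left_comm]

theorem dotProduct_mulVec_self_nonneg_of_eigenvalues_nonneg {i₀ : n}
    (hpos : ∀ i ≠ i₀, 0 ≤ hA.eigenvalues i) {x : n → ℝ}
    (hx : (star (hA.eigenvectorUnitary : Matrix n n ℝ) *ᵥ x) i₀ = 0) :
    0 ≤ x ⬝ᵥ A *ᵥ x := by
  rw [hA.dotProduct_mulVec_self_eq_sum_eigenvalues]
  refine Finset.sum_nonneg fun i _ => ?_
  obtain rfl | hi := eq_or_ne i i₀
  · simp [hx]
  · exact mul_nonneg (hpos i hi) (sq_nonneg _)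

end Matrix.IsHermitian

/-- Let Ω be an (n+1)×(n+1) real symmetric matrix with exactly one
negative eigenvalue and with Ω_{n+1,n+1} < 0. If x ∈ ℝ^{n+1} is such that the
(n+1)-st entry of Ωx equals 0, then xᵀΩx ≥ 0. -/
theorem stmt_0 {n : ℕ} (Ω : Matrix (Fin (n + 1)) (Fin (n + 1)) ℝ)
    (hΩ : Ω.IsHermitian)
    (hone : (Finset.univ.filter (fun i => hΩ.eigenvalues i < 0)).card = 1)
    (hcorner : Ω (Fin.last n) (Fin.last n) < 0)
    (x : Fin (n + 1) → ℝ) (hx : (Ω.mulVec x) (Fin.last n) = 0) :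
    0 ≤ x ⬝ᵥ Ω.mulVec x := by
  obtain ⟨i₀, hi₀⟩ := Finset.card_eq_one.mp hone
  have hpos : ∀ i ≠ i₀, 0 ≤ hΩ.eigenvalues i := fun i hi => by
    simpa [hi] using (Finset.ext_iff.mp hi₀ i).not
  have hsymm : Ω.toBilin'.IsSymm := isSymm_toBilin'_iff_isSymm.mpr hΩ
  let φ := LinearMap.proj i₀ ∘ₗ
    (star (hΩ.eigenvectorUnitary : Matrix (Fin (n + 1)) (Fin (n + 1)) ℝ)).mulVecLin
  have hφ : ∀ w ∈ LinearMap.ker φ, 0 ≤ Ω.toBilin' w w := fun w hw => by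
    rw [toBilin'_apply']
    exact hΩ.dotProduct_mulVec_self_nonneg_of_eigenvalues_nonneg hpos hw
  let e : Fin (n + 1) → ℝ := Pi.single (Fin.last n) 1
  have he : Ω.toBilin' e e < 0 := by simpa [e, toBilin'_single] using hcorner
  have hex : Ω.toBilin' e x = 0 := by simpa [e, toBilin'_apply', single_dotProduct] using hx
  simpa [toBilin'_apply'] using
    LinearMap.BilinForm.apply_self_nonneg_of_orthogonal_of_neg hsymm φ hφ he hex
end

section
/- Let M be an n×n real symmetric matrix with exactly one negative eigenvalue, and suppose b := 1ᵀM1 < 0, where 1 is the all-ones vector. Define α := −M1 and the (n+1)×(n+1) block matrix Ω = [[M, α],[αᵀ, b]]. Then Ω has the same rank as M and has exactly one negative eigenvalue. -/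
/-!
Let `P : ℝⁿ⁺¹ → ℝⁿ` be `x ↦ (xᵢ - xₙ₊₁)ᵢ`. Then `Ω = Pᵀ M P`, and `P` has a right inverse `Q`
(extension by zero), so `M = Qᵀ Ω Q` as well. Congruences in both directions preserve the rank
and the negative index of inertia, the largest dimension of a subspace on which the quadratic
form is negative definite; for a symmetric matrix the latter is the number of negative
eigenvalues, as one sees by diagonalizing.
-/

open Module

namespace Matrix

variable {ι κ : Type*} [Fintype ι] [Fintype κ]

def IsNegDefOn (A : Matrix ι ι ℝ) (W : Submodule ℝ (ι → ℝ)) : Prop :=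
  ∀ v ∈ W, v ≠ 0 → v ⬝ᵥ A *ᵥ v < 0

noncomputable def negIndex (A : Matrix ι ι ℝ) : ℕ :=
  sSup {k | ∃ W : Submodule ℝ (ι → ℝ), A.IsNegDefOn W ∧ finrank ℝ W = k}

lemma bddAbove_finrank_isNegDefOn (A : Matrix ι ι ℝ) :
    BddAbove {k | ∃ W : Submodule ℝ (ι → ℝ), A.IsNegDefOn W ∧ finrank ℝ W = k} := by
  refine ⟨Fintype.card ι, ?_⟩
  rintro _ ⟨W, -, rfl⟩
  simpa using W.finrank_le

lemma IsNegDefOn.finrank_le_negIndex {A : Matrix ι ι ℝ} {W : Submodule ℝ (ι → ℝ)}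
    (hW : A.IsNegDefOn W) : finrank ℝ W ≤ A.negIndex :=
  le_csSup (bddAbove_finrank_isNegDefOn A) ⟨W, hW, rfl⟩

lemma exists_isNegDefOn_finrank_eq_negIndex (A : Matrix ι ι ℝ) :
    ∃ W : Submodule ℝ (ι → ℝ), A.IsNegDefOn W ∧ finrank ℝ W = A.negIndex :=
  Nat.sSup_mem (s := {k | ∃ W : Submodule ℝ (ι → ℝ), A.IsNegDefOn W ∧ finrank ℝ W = k})
    ⟨0, ⊥, fun _ hv hv0 => absurd ((Submodule.mem_bot ℝ).mp hv) hv0, finrank_bot ℝ _⟩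
    (bddAbove_finrank_isNegDefOn A)

lemma dotProduct_transpose_mul_mul_mulVec {R : Type*} [CommSemiring R] (A : Matrix κ κ R)
    (P : Matrix κ ι R) (v : ι → R) :
    v ⬝ᵥ (Pᵀ * A * P) *ᵥ v = P *ᵥ v ⬝ᵥ A *ᵥ (P *ᵥ v) := by
  rw [← mulVec_mulVec, ← mulVec_mulVec, dotProduct_mulVec, vecMul_transpose]

lemma IsNegDefOn.map {A : Matrix κ κ ℝ} {P : Matrix κ ι ℝ} {W : Submodule ℝ (ι → ℝ)}
    (hW : (Pᵀ * A * P).IsNegDefOn W) :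
    A.IsNegDefOn (W.map P.mulVecLin) ∧ finrank ℝ (W.map P.mulVecLin) = finrank ℝ W := by
  have hinj : Function.Injective (P.mulVecLin.domRestrict W) := by
    rw [← LinearMap.ker_eq_bot, LinearMap.ker_eq_bot']
    rintro ⟨v, hv⟩ hPv
    by_contra hv0
    have := hW v hv (by simpa using hv0)
    simp_all [dotProduct_transpose_mul_mul_mulVec]
  refine ⟨?_, by rw [← LinearMap.range_domRestrict, LinearMap.finrank_range_of_inj hinj]⟩
  rintro _ ⟨v, hv, rfl⟩ hPv
  have hv0 : v ≠ 0 := by rintro rfl; simp at hPv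
  simpa [dotProduct_transpose_mul_mul_mulVec] using hW v hv hv0

lemma negIndex_transpose_mul_mul_le (A : Matrix κ κ ℝ) (P : Matrix κ ι ℝ) :
    (Pᵀ * A * P).negIndex ≤ A.negIndex := by
  obtain ⟨W, hW, hrank⟩ := (Pᵀ * A * P).exists_isNegDefOn_finrank_eq_negIndex
  obtain ⟨hPW, hPrank⟩ := hW.map
  exact hrank ▸ hPrank ▸ hPW.finrank_le_negIndex

lemma transpose_mul_mul_transpose_mul_mul {R : Type*} [CommSemiring R] [DecidableEq κ]
    (A : Matrix κ κ R) {P : Matrix κ ι R} {Q : Matrix ι κ R} (hPQ : P * Q = 1) :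
    Qᵀ * (Pᵀ * A * P) * Q = A := by
  calc Qᵀ * (Pᵀ * A * P) * Q = (P * Q)ᵀ * A * (P * Q) := by
        simp only [transpose_mul, Matrix.mul_assoc]
    _ = A := by rw [hPQ, transpose_one, Matrix.one_mul, Matrix.mul_one]

lemma negIndex_transpose_mul_mul_eq [DecidableEq κ] (A : Matrix κ κ ℝ) {P : Matrix κ ι ℝ}
    {Q : Matrix ι κ ℝ} (hPQ : P * Q = 1) : (Pᵀ * A * P).negIndex = A.negIndex :=
  (negIndex_transpose_mul_mul_le A P).antisymm <| by
    simpa only [transpose_mul_mul_transpose_mul_mul A hPQ] using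
      negIndex_transpose_mul_mul_le (Pᵀ * A * P) Q

lemma rank_transpose_mul_mul_eq {R : Type*} [CommRing R] [StrongRankCondition R]
    [DecidableEq κ] (A : Matrix κ κ R) {P : Matrix κ ι R} {Q : Matrix ι κ R} (hPQ : P * Q = 1) :
    (Pᵀ * A * P).rank = A.rank := by
  refine le_antisymm ((rank_mul_le_left _ _).trans (rank_mul_le_right _ _)) ?_
  conv_lhs => rw [← transpose_mul_mul_transpose_mul_mul A hPQ]
  exact (rank_mul_le_left _ _).trans (rank_mul_le_right _ _)

lemma dotProduct_diagonal_mulVec {R : Type*} [CommSemiring R] [DecidableEq ι] (d v : ι → R) :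
    v ⬝ᵥ diagonal d *ᵥ v = ∑ i, d i * v i ^ 2 := by
  simp only [dotProduct, mulVec_diagonal]
  exact Finset.sum_congr rfl fun i _ => by ring

lemma isNegDefOn_diagonal_top [DecidableEq ι] {d : ι → ℝ} (hd : ∀ i, d i < 0) :
    (diagonal d).IsNegDefOn ⊤ := by
  intro v _ hv
  obtain ⟨i, hi⟩ := Function.ne_iff.mp hv
  rw [dotProduct_diagonal_mulVec]
  exact Finset.sum_neg' (fun j _ => mul_nonpos_of_nonpos_of_nonneg (hd j).le (sq_nonneg _))
    ⟨i, Finset.mem_univ i, mul_neg_of_neg_of_pos (hd i) (sq_pos_of_ne_zero (by simpa using hi))⟩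

lemma card_neg_le_negIndex_diagonal [DecidableEq ι] (d : ι → ℝ) :
    (Finset.univ.filter fun i => d i < 0).card ≤ (diagonal d).negIndex := by
  let E := (1 : Matrix ι ι ℝ).submatrix id (Subtype.val : {i // d i < 0} → ι)
  have hE : Eᵀ * diagonal d * E = diagonal (d ∘ Subtype.val) := by
    ext s t
    by_cases h : (s : ι) = t <;> simp [E, mul_apply, diagonal, one_apply, Subtype.ext_iff, h]
  calc (Finset.univ.filter fun i => d i < 0).card
        = finrank ℝ (⊤ : Submodule ℝ ({i // d i < 0} → ℝ)) := by
        simp [Fintype.card_subtype]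
    _ ≤ (Eᵀ * diagonal d * E).negIndex :=
        hE ▸ (isNegDefOn_diagonal_top fun i => i.2).finrank_le_negIndex
    _ ≤ (diagonal d).negIndex := negIndex_transpose_mul_mul_le _ _

lemma negIndex_diagonal_le_card_neg [DecidableEq ι] (d : ι → ℝ) :
    (diagonal d).negIndex ≤ (Finset.univ.filter fun i => d i < 0).card := by
  obtain ⟨W, hW, hrank⟩ := (diagonal d).exists_isNegDefOn_finrank_eq_negIndex
  by_contra! hlt
  let f := (LinearMap.funLeft ℝ ℝ (Subtype.val : {i // d i < 0} → ι)).comp W.subtype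
  obtain ⟨⟨v, hvW⟩, hker, hv0⟩ := Submodule.exists_mem_ne_zero_of_ne_bot
    (LinearMap.ker_ne_bot_of_finrank_lt (f := f) (by simpa [Fintype.card_subtype, hrank] using hlt))
  have hvneg : ∀ i, d i < 0 → v i = 0 := fun i hi => congrFun hker ⟨i, hi⟩
  refine (hW v hvW (by simpa using hv0)).not_ge ?_
  rw [dotProduct_diagonal_mulVec]
  refine Finset.sum_nonneg fun i _ => ?_
  rcases lt_or_ge (d i) 0 with hi | hi
  · simp [hvneg i hi]
  · positivity

lemma negIndex_diagonal [DecidableEq ι] (d : ι → ℝ) :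
    (diagonal d).negIndex = (Finset.univ.filter fun i => d i < 0).card :=
  (negIndex_diagonal_le_card_neg d).antisymm (card_neg_le_negIndex_diagonal d)

lemma IsHermitian.negIndex_eq [DecidableEq ι] {A : Matrix ι ι ℝ} (hA : A.IsHermitian) :
    A.negIndex = (Finset.univ.filter fun i => hA.eigenvalues i < 0).card := by
  set U : Matrix ι ι ℝ := ↑hA.eigenvectorUnitary
  have hdiag : Uᵀ * A * U = diagonal hA.eigenvalues := by
    rw [← conjTranspose_eq_transpose_of_trivial, ← star_eq_conjTranspose]
    simpa using hA.conjStarAlgAut_star_eigenvectorUnitary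
  have hUU : U * Uᵀ = 1 := by
    rw [← conjTranspose_eq_transpose_of_trivial, ← star_eq_conjTranspose]
    exact Unitary.coe_mul_star_self _
  rw [← negIndex_transpose_mul_mul_eq A hUU, hdiag, negIndex_diagonal]

/-- Row `i` is `e i.castSucc - e (Fin.last n)`, so `(lastDiff R n)ᵀ * M * lastDiff R n` is `M`
bordered by `-M 1` and `1ᵀ M 1`. -/
def lastDiff (R : Type*) [Ring R] (n : ℕ) : Matrix (Fin n) (Fin (n + 1)) R :=
  of fun i => Fin.lastCases (-1) fun j => if i = j then 1 else 0

lemma lastDiff_mul_submatrix_castSucc (R : Type*) [Ring R] (n : ℕ) :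
    lastDiff R n * (1 : Matrix (Fin (n + 1)) (Fin (n + 1)) R).submatrix id Fin.castSucc = 1 := by
  ext i j
  simp [lastDiff, mul_apply, one_apply]

lemma eq_transpose_lastDiff_mul_mul {R : Type*} [CommRing R] {n : ℕ}
    {M : Matrix (Fin n) (Fin n) R} (hM : M.IsSymm) {Ω : Matrix (Fin (n + 1)) (Fin (n + 1)) R}
    (hΩM : ∀ i j : Fin n, Ω i.castSucc j.castSucc = M i j)
    (hΩα : ∀ i : Fin n, Ω i.castSucc (Fin.last n) = -(M *ᵥ 1) i)
    (hΩαt : ∀ j : Fin n, Ω (Fin.last n) j.castSucc = -(M *ᵥ 1) j)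
    (hΩb : Ω (Fin.last n) (Fin.last n) = 1 ⬝ᵥ M *ᵥ 1) :
    Ω = (lastDiff R n)ᵀ * M * lastDiff R n := by
  ext i j
  induction i using Fin.lastCases <;> induction j using Fin.lastCases
  case last.last =>
    rw [hΩb]
    simpa [lastDiff, mul_apply, mulVec, dotProduct] using Finset.sum_comm
  case last.cast j =>
    rw [hΩαt]
    simp [lastDiff, mul_apply, mulVec, dotProduct, hM.apply]
  case cast.last i =>
    rw [hΩα]
    simp [lastDiff, mul_apply, mulVec, dotProduct]
  case cast.cast i j =>
    rw [hΩM]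
    simp [lastDiff, mul_apply]

end Matrix

open Matrix

theorem stmt_1_general {n : ℕ} (M : Matrix (Fin n) (Fin n) ℝ)
    (hM : M.IsHermitian)
    (honeM : (Finset.univ.filter (fun i => hM.eigenvalues i < 0)).card = 1)
    (α : Fin n → ℝ) (hα : α = -(M.mulVec (fun _ => 1)))
    (b : ℝ) (hb : b = (fun _ => (1 : ℝ)) ⬝ᵥ M.mulVec (fun _ => 1))
    (Ω : Matrix (Fin (n + 1)) (Fin (n + 1)) ℝ)
    (hΩM : ∀ i j : Fin n, Ω i.castSucc j.castSucc = M i j)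
    (hΩα : ∀ i : Fin n, Ω i.castSucc (Fin.last n) = α i)
    (hΩαt : ∀ j : Fin n, Ω (Fin.last n) j.castSucc = α j)
    (hΩb : Ω (Fin.last n) (Fin.last n) = b) :
    Ω.rank = M.rank ∧
      ∃ hΩ : Ω.IsHermitian,
        (Finset.univ.filter (fun i => hΩ.eigenvalues i < 0)).card = 1 := by
  subst hα hb
  obtain rfl := eq_transpose_lastDiff_mul_mul (isHermitian_iff_isSymm.mp hM) hΩM hΩα hΩαt hΩb
  have hPQ := lastDiff_mul_submatrix_castSucc ℝ n
  have hΩ : ((lastDiff ℝ n)ᵀ * M * lastDiff ℝ n).IsHermitian := by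
    simpa [conjTranspose_eq_transpose_of_trivial] using
      isHermitian_conjTranspose_mul_mul (lastDiff ℝ n) hM
  refine ⟨rank_transpose_mul_mul_eq M hPQ, hΩ, ?_⟩
  rw [← hΩ.negIndex_eq, negIndex_transpose_mul_mul_eq M hPQ, hM.negIndex_eq, honeM]

/-- Let M be an n×n real symmetric matrix with exactly one negative
eigenvalue, and suppose b := 1ᵀM1 < 0.  Define α := −M1 and the (n+1)×(n+1)
block matrix Ω = [[M, α],[αᵀ, b]].  Then Ω has the same rank as M and has
exactly one negative eigenvalue. -/
theorem stmt_1 {n : ℕ} (M : Matrix (Fin n) (Fin n) ℝ)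
    (hM : M.IsHermitian)
    (honeM : (Finset.univ.filter (fun i => hM.eigenvalues i < 0)).card = 1)
    (α : Fin n → ℝ) (hα : α = -(M.mulVec (fun _ => 1)))
    (b : ℝ) (hb : b = (fun _ => (1 : ℝ)) ⬝ᵥ M.mulVec (fun _ => 1))
    (hbneg : b < 0)
    (Ω : Matrix (Fin (n + 1)) (Fin (n + 1)) ℝ)
    (hΩM : ∀ i j : Fin n, Ω i.castSucc j.castSucc = M i j)
    (hΩα : ∀ i : Fin n, Ω i.castSucc (Fin.last n) = α i)
    (hΩαt : ∀ j : Fin n, Ω (Fin.last n) j.castSucc = α j)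
    (hΩb : Ω (Fin.last n) (Fin.last n) = b) :
    Ω.rank = M.rank ∧
      ∃ hΩ : Ω.IsHermitian,
        (Finset.univ.filter (fun i => hΩ.eigenvalues i < 0)).card = 1 :=
  stmt_1_general M hM honeM α hα b hb Ω hΩM hΩα hΩαt hΩb
end

section
/- Let Ω be an (n+1)×(n+1) real symmetric matrix with exactly one negative eigenvalue and Ω_{n+1,n+1} < 0, and let p̂' be an (n+1)×d real matrix each of whose columns x satisfies (Ωx)_{n+1} = 0. If tr(p̂'ᵀ Ω p̂') = 0, then Ω p̂' = 0, i.e. every column of p̂' lies in the kernel of Ω. -/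
open Matrix

lemma stmt4_key {m : ℕ} (μ w : Fin m → ℝ) (i₀ : Fin m) (hneg : μ i₀ < 0)
    (hpos : ∀ i, i ≠ i₀ → 0 ≤ μ i)
    (hw : ∑ i, μ i * w i ^ 2 < 0) (x : Fin m → ℝ)
    (hortho : ∑ i, μ i * (w i * x i) = 0) :
    0 ≤ ∑ i, μ i * x i ^ 2 ∧ (∑ i, μ i * x i ^ 2 = 0 → ∀ i, μ i * x i = 0) := by
  classical
  set s := Finset.univ.erase i₀ with hs
  have hmem : i₀ ∈ (Finset.univ : Finset (Fin m)) := Finset.mem_univ _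
  have hsplit : ∀ f : Fin m → ℝ, ∑ i, f i = f i₀ + ∑ i ∈ s, f i := by
    intro f
    rw [hs, ← Finset.add_sum_erase _ f hmem]
  have hμs : ∀ i ∈ s, 0 ≤ μ i := by
    intro i hi
    exact hpos i (Finset.ne_of_mem_erase hi)
  set Sw := ∑ i ∈ s, μ i * w i ^ 2 with hSwdef
  set Sx := ∑ i ∈ s, μ i * x i ^ 2 with hSxdef
  set T := ∑ i ∈ s, μ i * (w i * x i) with hTdef
  have hSw : 0 ≤ Sw := Finset.sum_nonneg fun i hi => mul_nonneg (hμs i hi) (sq_nonneg _)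
  have hSx : 0 ≤ Sx := Finset.sum_nonneg fun i hi => mul_nonneg (hμs i hi) (sq_nonneg _)
  have hw' : μ i₀ * w i₀ ^ 2 + Sw < 0 := by
    have h := hsplit (fun i => μ i * w i ^ 2)
    rw [hSwdef, ← h]; exact hw
  have hT : μ i₀ * (w i₀ * x i₀) + T = 0 := by
    have h := hsplit (fun i => μ i * (w i * x i))
    rw [hTdef, ← h]; exact hortho
  have hCS : T ^ 2 ≤ Sw * Sx := by
    have := Finset.sum_mul_sq_le_sq_mul_sq s (fun i => Real.sqrt (μ i) * w i)
      (fun i => Real.sqrt (μ i) * x i)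
    have e1 : ∀ i ∈ s, (Real.sqrt (μ i) * w i) * (Real.sqrt (μ i) * x i)
        = μ i * (w i * x i) := by
      intro i hi
      rw [show Real.sqrt (μ i) * w i * (Real.sqrt (μ i) * x i)
        = (Real.sqrt (μ i) * Real.sqrt (μ i)) * (w i * x i) by ring,
        Real.mul_self_sqrt (hμs i hi)]
    have e2 : ∀ i ∈ s, (Real.sqrt (μ i) * w i) ^ 2 = μ i * w i ^ 2 := by
      intro i hi
      rw [mul_pow, Real.sq_sqrt (hμs i hi)]
    have e3 : ∀ i ∈ s, (Real.sqrt (μ i) * x i) ^ 2 = μ i * x i ^ 2 := by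
      intro i hi
      rw [mul_pow, Real.sq_sqrt (hμs i hi)]
    rw [Finset.sum_congr rfl e1, Finset.sum_congr rfl e2, Finset.sum_congr rfl e3] at this
    exact this
  have hbne : w i₀ ≠ 0 := by
    intro h
    rw [h] at hw'
    simp at hw'
    linarith
  have hLb : 0 < (-μ i₀) * w i₀ ^ 2 :=
    mul_pos (by linarith) (by positivity)
  -- key inequality: (-μ i₀) * x i₀ ^ 2 ≤ Sx
  have hmain : (-μ i₀) * x i₀ ^ 2 ≤ Sx := by
    have hT2 : T ^ 2 = (μ i₀)^2 * w i₀ ^2 * x i₀ ^2 := by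
      have : T = -(μ i₀ * (w i₀ * x i₀)) := by linarith
      rw [this]; ring
    have h1 : (μ i₀)^2 * w i₀ ^2 * x i₀ ^2 ≤ ((-μ i₀) * w i₀ ^ 2) * Sx := by
      calc (μ i₀)^2 * w i₀ ^2 * x i₀ ^2 = T ^ 2 := hT2.symm
        _ ≤ Sw * Sx := hCS
        _ ≤ ((-μ i₀) * w i₀ ^ 2) * Sx :=
            mul_le_mul_of_nonneg_right (by linarith) hSx
    have h2 : ((-μ i₀) * w i₀ ^ 2) * ((-μ i₀) * x i₀ ^ 2) ≤ ((-μ i₀) * w i₀ ^ 2) * Sx := by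
      nlinarith [h1]
    exact le_of_mul_le_mul_left h2 hLb
  constructor
  · rw [hsplit]
    nlinarith [hmain]
  · intro heq
    have hh := hsplit (fun i => μ i * x i ^ 2)
    rw [hh] at heq
    have ha : x i₀ = 0 := by
      by_contra ha
      have hx2 : 0 < x i₀ ^ 2 := by positivity
      have hxpos : 0 < Sx :=
        lt_of_lt_of_le (mul_pos (by linarith : (0:ℝ) < -μ i₀) hx2) hmain
      have hT2 : T ^ 2 = (μ i₀)^2 * w i₀ ^2 * x i₀ ^2 := by
        have : T = -(μ i₀ * (w i₀ * x i₀)) := by linarith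
        rw [this]; ring
      have hstrict : Sw * Sx < ((-μ i₀) * w i₀ ^ 2) * Sx :=
        mul_lt_mul_of_pos_right (by linarith) hxpos
      have hSxeq : Sx = (-μ i₀) * x i₀ ^ 2 := by linarith
      nlinarith [hCS, hT2, hstrict, hSxeq]
    have hSx0 : Sx = 0 := by
      rw [ha] at heq; simp at heq; linarith
    have hterm : ∀ i ∈ s, μ i * x i ^ 2 = 0 :=
      (Finset.sum_eq_zero_iff_of_nonneg
        (fun i hi => mul_nonneg (hμs i hi) (sq_nonneg _))).mp hSx0
    intro i
    by_cases hi : i = i₀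
    · rw [hi, ha, mul_zero]
    · have := hterm i (Finset.mem_erase.mpr ⟨hi, Finset.mem_univ _⟩)
      rcases mul_eq_zero.mp this with h | h
      · rw [h, zero_mul]
      · rw [pow_eq_zero_iff (by norm_num) |>.mp h, mul_zero]


/-- Let Ω be an (n+1)×(n+1) real symmetric matrix with exactly one
negative eigenvalue and Ω_{n+1,n+1} < 0, and let p̂' be an (n+1)×d real matrix
each of whose columns x satisfies (Ωx)_{n+1} = 0.  If tr(p̂'ᵀ Ω p̂') = 0, then
Ω p̂' = 0, i.e. every column of p̂' lies in the kernel of Ω. -/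
theorem stmt_4 {n d : ℕ} (Ω : Matrix (Fin (n + 1)) (Fin (n + 1)) ℝ)
    (hΩ : Ω.IsHermitian)
    (hone : (Finset.univ.filter (fun i => hΩ.eigenvalues i < 0)).card = 1)
    (hcorner : Ω (Fin.last n) (Fin.last n) < 0)
    (p' : Matrix (Fin (n + 1)) (Fin d) ℝ)
    (hcols : ∀ j : Fin d, (Ω.mulVec (fun i => p' i j)) (Fin.last n) = 0)
    (htr : Matrix.trace (p'ᵀ * Ω * p') = 0) :
    Ω * p' = 0 := by
  classical
  set μ := hΩ.eigenvalues with hμdef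
  set U : Matrix (Fin (n+1)) (Fin (n+1)) ℝ := ↑(hΩ.eigenvectorUnitary) with hUdef
  have hspec : Ω = U * diagonal μ * star U := by
    have h := hΩ.spectral_theorem
    simpa using h
  have hmemU := (hΩ.eigenvectorUnitary).2
  have hUsU : star U * U = 1 := hmemU.1
  have hUUs : U * star U = 1 := hmemU.2
  set q : Matrix (Fin (n+1)) (Fin d) ℝ := star U * p' with hqdef
  set w : Fin (n+1) → ℝ := fun i => U (Fin.last n) i with hwdef
  have hstarU : ∀ i j, (star U) i j = U j i := by
    intro i j
    simp [Matrix.star_apply]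
  have hstarUT : (star U)ᵀ = U := by
    ext i j
    simp [Matrix.transpose_apply, hstarU]
  -- extract the unique negative index
  obtain ⟨i₀, hi₀⟩ := Finset.card_eq_one.mp hone
  have hneg : μ i₀ < 0 := by
    have := hi₀ ▸ Finset.mem_singleton_self i₀
    exact (Finset.mem_filter.mp this).2
  have hpos : ∀ i, i ≠ i₀ → 0 ≤ μ i := by
    intro i hi
    by_contra h
    push_neg at h
    exact hi (Finset.mem_singleton.mp
      (hi₀ ▸ Finset.mem_filter.mpr ⟨Finset.mem_univ _, h⟩))
  -- (A) corner entry in eigencoordinates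
  have hw : ∑ i, μ i * w i ^ 2 < 0 := by
    have hc : Ω (Fin.last n) (Fin.last n) = ∑ i, μ i * w i ^ 2 := by
      conv_lhs => rw [hspec]
      rw [Matrix.mul_apply]
      refine Finset.sum_congr rfl fun i _ => ?_
      rw [Matrix.mul_diagonal, hstarU]
      ring
    rw [← hc]; exact hcorner
  -- Ω * p' in eigencoordinates
  have hΩp : Ω * p' = U * (diagonal μ * q) := by
    rw [hspec, hqdef, Matrix.mul_assoc, Matrix.mul_assoc]
  -- (B) orthogonality of each column to e in eigencoordinates
  have hortho : ∀ j, ∑ i, μ i * (w i * q i j) = 0 := by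
    intro j
    have h0 : (Ω * p') (Fin.last n) j = 0 := by
      rw [← hcols j]
      rw [Matrix.mul_apply]
      rfl
    rw [hΩp, Matrix.mul_apply] at h0
    rw [← h0]
    refine Finset.sum_congr rfl fun i _ => ?_
    rw [Matrix.diagonal_mul]
    ring
  -- (C) trace in eigencoordinates
  have htr' : ∑ j, ∑ i, μ i * q i j ^ 2 = 0 := by
    have he : p'ᵀ * Ω * p' = qᵀ * diagonal μ * q := by
      rw [hspec, hqdef, Matrix.transpose_mul, hstarUT]
      simp only [Matrix.mul_assoc]
    rw [he] at htr
    rw [← htr, Matrix.trace]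
    refine Finset.sum_congr rfl fun j _ => ?_
    rw [Matrix.diag_apply, Matrix.mul_apply]
    refine Finset.sum_congr rfl fun i _ => ?_
    rw [Matrix.mul_diagonal, Matrix.transpose_apply]
    ring
  -- apply key lemma
  have hkey := fun j => stmt4_key μ w i₀ hneg hpos hw (fun i => q i j) (hortho j)
  have hzero : ∀ j, ∑ i, μ i * q i j ^ 2 = 0 := by
    have := (Finset.sum_eq_zero_iff_of_nonneg
      (fun j _ => (hkey j).1)).mp htr'
    intro j; exact this j (Finset.mem_univ j)
  have hmq : ∀ i j, μ i * q i j = 0 := fun i j => (hkey j).2 (hzero j) i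
  have hDq : diagonal μ * q = 0 := by
    ext i j
    rw [Matrix.diagonal_mul, Matrix.zero_apply]
    exact hmq i j
  rw [hΩp, hDq, Matrix.mul_zero]
end

section
/- Let G* be a graph on n+1 vertices obtained by coning a graph G on vertices {1,…,n} over vertex n+1 (i.e. adding edges from n+1 to every vertex of G). Let p be an n×d configuration, p_{n+1} = 0, and p̂ the resulting (n+1)×d configuration. Suppose M is a symmetric n×n matrix with M_{ij} = 0 for i≠j non-adjacent in G, M_{ij} < 0 for edges of G, and Mp = 0. Define α = −M1, b = 1ᵀM1, and Ω = [[M, α],[αᵀ, b]]. If all entries of α are positive, then Ω is a strictly proper equilibrium stress matrix for the tensegrity (G*, p̂) in which the edges of G are cables and the cone edges are struts. -/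
open Matrix

/-- Let G* be the cone of a graph G on {1,…,n} over the vertex
n+1.  Let p be an n×d configuration, p_{n+1} = 0, and p̂ the resulting
(n+1)×d configuration.  Suppose M is a symmetric n×n matrix with M_{ij} = 0
for i≠j non-adjacent in G, M_{ij} < 0 for edges of G, and Mp = 0.  Define
α = −M1, b = 1ᵀM1, and Ω = [[M, α],[αᵀ, b]].  If all entries of α are
positive, then Ω is a strictly proper equilibrium stress matrix for the
tensegrity (G*, p̂), with the edges of G as cables and the cone edges as
struts. -/
theorem stmt_7 {n d : ℕ} (G : SimpleGraph (Fin n))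
    (Gstar : SimpleGraph (Fin (n + 1)))
    (hGstar : ∀ i j : Fin (n + 1), Gstar.Adj i j ↔
      ((∃ i' j' : Fin n, i = i'.castSucc ∧ j = j'.castSucc ∧ G.Adj i' j') ∨
        (i = Fin.last n ∧ j ≠ Fin.last n) ∨ (j = Fin.last n ∧ i ≠ Fin.last n)))
    (M : Matrix (Fin n) (Fin n) ℝ)
    (hM : M.IsHermitian)
    (hMnonedge : ∀ i j : Fin n, i ≠ j → ¬G.Adj i j → M i j = 0)
    (hMedge : ∀ i j : Fin n, G.Adj i j → M i j < 0)
    (p : Matrix (Fin n) (Fin d) ℝ) (hMp : M * p = 0)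
    (α : Fin n → ℝ) (hα : α = -(M.mulVec (fun _ => 1)))
    (hαpos : ∀ i, 0 < α i)
    (b : ℝ) (hb : b = (fun _ => (1 : ℝ)) ⬝ᵥ M.mulVec (fun _ => 1))
    (Ω : Matrix (Fin (n + 1)) (Fin (n + 1)) ℝ)
    (hΩM : ∀ i j : Fin n, Ω i.castSucc j.castSucc = M i j)
    (hΩα : ∀ i : Fin n, Ω i.castSucc (Fin.last n) = α i)
    (hΩαt : ∀ j : Fin n, Ω (Fin.last n) j.castSucc = α j)
    (hΩb : Ω (Fin.last n) (Fin.last n) = b)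
    (phat : Matrix (Fin (n + 1)) (Fin d) ℝ)
    (hphat : ∀ (i : Fin n) (j : Fin d), phat i.castSucc j = p i j)
    (hphatlast : ∀ j : Fin d, phat (Fin.last n) j = 0) :
    Ω.IsHermitian ∧
      (∀ i j : Fin (n + 1), i ≠ j → ¬Gstar.Adj i j → Ω i j = 0) ∧
      Ω * phat = 0 ∧
      Ω.mulVec (fun _ => 1) = 0 ∧
      (∀ i j : Fin n, G.Adj i j → Ω i.castSucc j.castSucc < 0) ∧
      (∀ i : Fin n, 0 < Ω i.castSucc (Fin.last n)) := by
  have hMsym : ∀ i j, M i j = M j i := by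
    intro i j
    have := congrFun (congrFun hM.symm i) j
    simpa [Matrix.conjTranspose_apply] using this
  have hMp' : ∀ i k, ∑ j, M i j * p j k = 0 := by
    intro i k
    have := congrFun (congrFun hMp i) k
    simpa [Matrix.mul_apply] using this
  have hαdef : ∀ i, α i = -∑ j, M i j := by
    intro i; rw [hα]; simp [Matrix.mulVec, dotProduct]
  have hbdef : b = ∑ i, ∑ j, M i j := by
    rw [hb]; simp [Matrix.mulVec, dotProduct]
  refine ⟨?_, ?_, ?_, ?_, ?_, ?_⟩
  · ext i j
    induction i using Fin.lastCases with
    | last =>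
      induction j using Fin.lastCases with
      | last => simp
      | cast j => simp [Matrix.conjTranspose_apply, hΩα, hΩαt]
    | cast i =>
      induction j using Fin.lastCases with
      | last => simp [Matrix.conjTranspose_apply, hΩα, hΩαt]
      | cast j => simp [Matrix.conjTranspose_apply, hΩM, hMsym i j]
  · intro i j hij hadj
    induction i using Fin.lastCases with
    | last =>
      exact absurd ((hGstar _ _).2 (Or.inr (Or.inl ⟨rfl, Ne.symm hij⟩))) hadj
    | cast i =>
      induction j using Fin.lastCases with
      | last =>
        exact absurd ((hGstar _ _).2 (Or.inr (Or.inr ⟨rfl, hij⟩))) hadj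
      | cast j =>
        rw [hΩM]
        refine hMnonedge i j (fun h => hij (by rw [h])) (fun h => hadj ?_)
        exact (hGstar _ _).2 (Or.inl ⟨i, j, rfl, rfl, h⟩)
  · ext i k
    rw [Matrix.mul_apply, Fin.sum_univ_castSucc]
    induction i using Fin.lastCases with
    | last =>
      simp only [hΩαt, hΩb, hphat, hphatlast, mul_zero, add_zero, Matrix.zero_apply]
      have : ∀ j, α j * p j k = -∑ l, M l j * p j k := by
        intro j
        rw [hαdef, neg_mul, Finset.sum_mul, neg_inj]
        exact Finset.sum_congr rfl fun l _ => by rw [hMsym j l]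
      rw [Finset.sum_congr rfl fun j _ => this j]
      have h2 : ∑ j : Fin n, ∑ l : Fin n, M l j * p j k = 0 := by
        rw [Finset.sum_comm]; simp [hMp']
      simpa using h2
    | cast i =>
      simp only [hΩM, hΩα, hphat, hphatlast, mul_zero, add_zero, Matrix.zero_apply]
      exact hMp' i k
  · ext i
    rw [Matrix.mulVec, dotProduct, Fin.sum_univ_castSucc]
    induction i using Fin.lastCases with
    | last =>
      simp only [hΩαt, hΩb, mul_one, Pi.zero_apply]
      rw [hbdef, Finset.sum_congr rfl fun j (_ : j ∈ Finset.univ) => hαdef j]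
      simp
    | cast i =>
      simp only [hΩM, hΩα, mul_one, Pi.zero_apply, hαdef]
      ring
  · intro i j h; rw [hΩM]; exact hMedge i j h
  · intro i; rw [hΩα]; exact hαpos i
end

section
/- Let (G*, p̂) be the coned framework of a polytope one-skeleton as above, with Izmestiev stress Ω (exactly one negative eigenvalue, Ω_{n+1,n+1} < 0, ker Ω spanned by the d coordinate columns of p̂ together with the all-ones vector). Assume the stress-flex condition: for every infinitesimal flex p̂' of the bar framework, the (n+1)-st row of Ω p̂' is zero. Then every infinitesimal flex p̂' with tr(p̂'ᵀ Ω p̂') = 0 is an affine flex, i.e. there exist a d×d matrix A and t ∈ ℝ^d with p̂'_i = A p̂_i + t for all i. -/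
/-!
In an orthonormal eigenbasis of `Ω` the quadratic form becomes `Q x = ∑ μᵢ xᵢ²` with at most one
negative coefficient `μ_{i₀}`. The stress-flex condition makes every column `x` of `p'`
`Ω`-orthogonal to the last standard basis vector `e`, and `Q e = Ω_{n+1,n+1} < 0`. Since the vector
`x - t e` with vanishing `i₀`-coordinate has `Q (x - t e) = Q x + t² Q e ≥ 0`, we get `Q x ≥ 0`, and
`Q x = 0` forces `t = 0` and then `x ∈ ker Ω`. The trace is the sum of `Q` over the columns, so each
column lies in `ker Ω = span (1, columns of p̂)`, which is exactly an affine flex.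
-/

open Matrix

section DiagonalForm

variable {ι : Type*} {μ : ι → ℝ} {i₀ : ι}

lemma mul_mul_self_nonneg_of_apply_eq_zero (hμ : ∀ i ≠ i₀, 0 ≤ μ i) {x : ι → ℝ}
    (hx : x i₀ = 0) (i : ι) : 0 ≤ μ i * x i * x i := by
  rcases eq_or_ne i i₀ with rfl | hi
  · simp [hx]
  · rw [mul_assoc]
    exact mul_nonneg (hμ i hi) (mul_self_nonneg _)

lemma apply_ne_zero_of_sum_mul_mul_self_neg [Fintype ι] (hμ : ∀ i ≠ i₀, 0 ≤ μ i) {e : ι → ℝ}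
    (he : ∑ i, μ i * e i * e i < 0) : e i₀ ≠ 0 := fun h =>
  he.not_ge <| Finset.sum_nonneg fun i _ => mul_mul_self_nonneg_of_apply_eq_zero hμ h i

lemma sum_mul_mul_self_add_sq_mul_nonneg [Fintype ι] (hμ : ∀ i ≠ i₀, 0 ≤ μ i) {e x : ι → ℝ}
    (he : e i₀ ≠ 0) (hex : ∑ i, μ i * e i * x i = 0) :
    0 ≤ ∑ i, μ i * x i * x i + (x i₀ / e i₀) ^ 2 * ∑ i, μ i * e i * e i := by
  set t := x i₀ / e i₀
  have hnonneg : 0 ≤ ∑ i, μ i * (x - t • e) i * (x - t • e) i :=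
    Finset.sum_nonneg fun i _ => mul_mul_self_nonneg_of_apply_eq_zero hμ (by simp [t, he]) i
  have hexpand : ∑ i, μ i * (x - t • e) i * (x - t • e) i =
      ∑ i, μ i * x i * x i - 2 * t * ∑ i, μ i * e i * x i + t ^ 2 * ∑ i, μ i * e i * e i := by
    simp only [Finset.mul_sum, ← Finset.sum_sub_distrib, ← Finset.sum_add_distrib]
    refine Finset.sum_congr rfl fun i _ => ?_
    simp only [Pi.sub_apply, Pi.smul_apply, smul_eq_mul]
    ring
  rwa [hexpand, hex, mul_zero, sub_zero] at hnonneg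

lemma sum_mul_mul_self_nonneg_of_orthogonal [Fintype ι] (hμ : ∀ i ≠ i₀, 0 ≤ μ i) {e x : ι → ℝ}
    (he : ∑ i, μ i * e i * e i < 0) (hex : ∑ i, μ i * e i * x i = 0) :
    0 ≤ ∑ i, μ i * x i * x i := by
  have := sum_mul_mul_self_add_sq_mul_nonneg hμ (apply_ne_zero_of_sum_mul_mul_self_neg hμ he) hex
  nlinarith [sq_nonneg (x i₀ / e i₀)]

lemma mul_apply_eq_zero_of_orthogonal [Fintype ι] (hμ : ∀ i ≠ i₀, 0 ≤ μ i) {e x : ι → ℝ}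
    (he : ∑ i, μ i * e i * e i < 0) (hex : ∑ i, μ i * e i * x i = 0)
    (hx : ∑ i, μ i * x i * x i = 0) (i : ι) : μ i * x i = 0 := by
  have he₀ := apply_ne_zero_of_sum_mul_mul_self_neg hμ he
  have hineq := sum_mul_mul_self_add_sq_mul_nonneg hμ he₀ hex
  have hx₀ : x i₀ = 0 := by
    have : (x i₀ / e i₀) ^ 2 = 0 := by nlinarith [sq_nonneg (x i₀ / e i₀)]
    simpa [he₀] using this
  have hterms := (Finset.sum_eq_zero_iff_of_nonneg fun i _ =>
    mul_mul_self_nonneg_of_apply_eq_zero hμ hx₀ i).mp hx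
  simpa using hterms i (Finset.mem_univ i)

end DiagonalForm

namespace Matrix.IsHermitian

variable {ι : Type*} [Fintype ι] [DecidableEq ι] {A : Matrix ι ι ℝ} (hA : A.IsHermitian)

lemma dotProduct_mulVec_eq_sum_eigenvalues (x y : ι → ℝ) :
    x ⬝ᵥ A *ᵥ y = ∑ i, hA.eigenvalues i * (star (hA.eigenvectorUnitary : Matrix ι ι ℝ) *ᵥ x) i *
      (star (hA.eigenvectorUnitary : Matrix ι ι ℝ) *ᵥ y) i := by
  conv_lhs => rw [hA.spectral_theorem, Unitary.conjStarAlgAut_apply]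
  rw [← mulVec_mulVec, ← mulVec_mulVec, dotProduct_mulVec, star_eq_conjTranspose,
    conjTranspose_eq_transpose_of_trivial, ← mulVec_transpose]
  simp [dotProduct, mulVec_diagonal, mul_assoc, mul_left_comm]

lemma mulVec_eq_zero_iff_forall_eigenvalues_mul (x : ι → ℝ) :
    A *ᵥ x = 0 ↔
      ∀ i, hA.eigenvalues i * (star (hA.eigenvectorUnitary : Matrix ι ι ℝ) *ᵥ x) i = 0 := by
  have hU : ∀ v, (hA.eigenvectorUnitary : Matrix ι ι ℝ) *ᵥ v = 0 ↔ v = 0 := fun v => by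
    refine ⟨fun h => ?_, fun h => by rw [h, mulVec_zero]⟩
    rw [← one_mulVec v, ← Unitary.coe_star_mul_self hA.eigenvectorUnitary, ← mulVec_mulVec, h,
      mulVec_zero]
  conv_lhs => rw [hA.spectral_theorem, Unitary.conjStarAlgAut_apply]
  rw [← mulVec_mulVec, ← mulVec_mulVec, hU, funext_iff]
  simp [mulVec_diagonal]

variable {i₀ : ι} {e x : ι → ℝ}

lemma dotProduct_mulVec_self_nonneg_of_orthogonal (hμ : ∀ i ≠ i₀, 0 ≤ hA.eigenvalues i)
    (he : e ⬝ᵥ A *ᵥ e < 0) (hex : e ⬝ᵥ A *ᵥ x = 0) : 0 ≤ x ⬝ᵥ A *ᵥ x := by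
  rw [dotProduct_mulVec_eq_sum_eigenvalues hA] at he hex ⊢
  exact sum_mul_mul_self_nonneg_of_orthogonal hμ he hex

lemma mulVec_eq_zero_of_orthogonal (hμ : ∀ i ≠ i₀, 0 ≤ hA.eigenvalues i)
    (he : e ⬝ᵥ A *ᵥ e < 0) (hex : e ⬝ᵥ A *ᵥ x = 0) (hx : x ⬝ᵥ A *ᵥ x = 0) : A *ᵥ x = 0 := by
  rw [dotProduct_mulVec_eq_sum_eigenvalues hA] at he hex hx
  exact (hA.mulVec_eq_zero_iff_forall_eigenvalues_mul x).2 <|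
    mul_apply_eq_zero_of_orthogonal hμ he hex hx

end Matrix.IsHermitian

lemma Finset.exists_forall_ne_nonneg_of_card_filter_neg_eq_one {ι : Type*} [Fintype ι]
    {f : ι → ℝ} (h : (Finset.univ.filter (fun i => f i < 0)).card = 1) :
    ∃ i₀, ∀ i ≠ i₀, 0 ≤ f i := by
  obtain ⟨i₀, hi₀⟩ := Finset.card_eq_one.mp h
  refine ⟨i₀, fun i hi => not_lt.mp fun hneg => hi ?_⟩
  have hmem : i ∈ Finset.univ.filter (fun i => f i < 0) := by simp [hneg]
  rwa [hi₀, Finset.mem_singleton] at hmem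

section Columns

variable {R m : Type*} [CommSemiring R] [Fintype m] {n : Type*}

lemma Matrix.trace_transpose_mul_mul_self [Fintype n] (M : Matrix m n R) (A : Matrix m m R) :
    trace (Mᵀ * A * M) = ∑ j, (fun i => M i j) ⬝ᵥ A *ᵥ (fun i => M i j) := by
  refine Finset.sum_congr rfl fun j _ => ?_
  rw [diag_apply, Matrix.mul_assoc, mul_apply']
  rfl

lemma Matrix.single_one_dotProduct_mulVec_col [DecidableEq m] (A : Matrix m m R)
    (M : Matrix m n R) (k : m) (j : n) :
    Pi.single k 1 ⬝ᵥ A *ᵥ (fun i => M i j) = (A * M) k j := by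
  rw [single_one_dotProduct, mul_apply', mulVec]

end Columns

lemma Matrix.exists_mulVec_add_of_col_mem_span {m d d' : Type*} [Fintype d]
    (P : Matrix m d ℝ) (Q : Matrix m d' ℝ)
    (h : ∀ j, (fun i => Q i j) ∈ Submodule.span ℝ
      (insert (fun _ => (1 : ℝ)) (Set.range fun k : d => fun i : m => P i k))) :
    ∃ (A : Matrix d' d ℝ) (t : d' → ℝ), ∀ i, (fun j => Q i j) = A *ᵥ (fun k => P i k) + t := by
  simp only [Submodule.mem_span_insert, Submodule.mem_span_range_iff_exists_fun] at h
  choose t z hz hQ using h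
  choose A hA using hz
  refine ⟨Matrix.of A, t, fun i => funext fun j => ?_⟩
  have hQi := congrFun (hQ j) i
  rw [← hA j] at hQi
  simp [hQi, mulVec, dotProduct, Finset.sum_apply, mul_comm, add_comm]

theorem stmt_9_general {n d : ℕ} (Gstar : SimpleGraph (Fin (n + 1)))
    (phat : Matrix (Fin (n + 1)) (Fin d) ℝ)
    (Ω : Matrix (Fin (n + 1)) (Fin (n + 1)) ℝ)
    (hΩ : Ω.IsHermitian)
    (hone : (Finset.univ.filter (fun i => hΩ.eigenvalues i < 0)).card = 1)
    (hcorner : Ω (Fin.last n) (Fin.last n) < 0)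
    (hker : LinearMap.ker Ω.mulVecLin =
      Submodule.span ℝ
        (insert (fun _ => (1 : ℝ))
          (Set.range fun j : Fin d => fun i : Fin (n + 1) => phat i j)))
    (hstressflex : ∀ q : Matrix (Fin (n + 1)) (Fin d) ℝ,
      (∀ i i' : Fin (n + 1), Gstar.Adj i i' →
        (fun k => phat i k - phat i' k) ⬝ᵥ (fun k => q i k - q i' k) = 0) →
      ∀ j : Fin d, (Ω * q) (Fin.last n) j = 0)
    (p' : Matrix (Fin (n + 1)) (Fin d) ℝ)
    (hflex : ∀ i i' : Fin (n + 1), Gstar.Adj i i' →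
      (fun k => phat i k - phat i' k) ⬝ᵥ (fun k => p' i k - p' i' k) = 0)
    (htr : Matrix.trace (p'ᵀ * Ω * p') = 0) :
    ∃ (A : Matrix (Fin d) (Fin d) ℝ) (t : Fin d → ℝ),
      ∀ i : Fin (n + 1), (fun j => p' i j) = A.mulVec (fun j => phat i j) + t := by
  obtain ⟨i₀, hμ⟩ := Finset.exists_forall_ne_nonneg_of_card_filter_neg_eq_one hone
  set e : Fin (n + 1) → ℝ := Pi.single (Fin.last n) 1
  have he : e ⬝ᵥ Ω *ᵥ e < 0 := by simpa [e, single_one_dotProduct, mulVec_single_one] using hcorner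
  set col : Fin d → Fin (n + 1) → ℝ := fun j i => p' i j
  have horth : ∀ j, e ⬝ᵥ Ω *ᵥ col j = 0 := fun j =>
    (single_one_dotProduct_mulVec_col Ω p' _ j).trans (hstressflex p' hflex j)
  have hnonneg : ∀ j, 0 ≤ col j ⬝ᵥ Ω *ᵥ col j := fun j =>
    hΩ.dotProduct_mulVec_self_nonneg_of_orthogonal hμ he (horth j)
  have hzero : ∀ j, col j ⬝ᵥ Ω *ᵥ col j = 0 := by
    rw [trace_transpose_mul_mul_self] at htr
    exact fun j => (Finset.sum_eq_zero_iff_of_nonneg fun j _ => hnonneg j).mp htr j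
      (Finset.mem_univ j)
  refine exists_mulVec_add_of_col_mem_span phat p' fun j => ?_
  rw [← hker, LinearMap.mem_ker, mulVecLin_apply]
  exact hΩ.mulVec_eq_zero_of_orthogonal hμ he (horth j) (hzero j)

/-- Let (G*, p̂) be the coned framework of a polytope one-skeleton,
with Izmestiev stress Ω (exactly one negative eigenvalue, Ω_{n+1,n+1} < 0,
ker Ω spanned by the d coordinate columns of p̂ together with the all-ones
vector).  Assume the stress-flex condition: for every infinitesimal flex p̂' of
the bar framework, the (n+1)-st row of Ω p̂' is zero.  Then every infinitesimal
flex p̂' with tr(p̂'ᵀ Ω p̂') = 0 is an affine flex, i.e. there exist a d×d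
matrix A and t ∈ ℝ^d with p̂'_i = A p̂_i + t for all i. -/
theorem stmt_9 {n d : ℕ} (Gstar : SimpleGraph (Fin (n + 1)))
    (phat : Matrix (Fin (n + 1)) (Fin d) ℝ)
    (Ω : Matrix (Fin (n + 1)) (Fin (n + 1)) ℝ)
    (hΩ : Ω.IsHermitian)
    (hsupp : ∀ i j : Fin (n + 1), i ≠ j → ¬Gstar.Adj i j → Ω i j = 0)
    (hone : (Finset.univ.filter (fun i => hΩ.eigenvalues i < 0)).card = 1)
    (hcorner : Ω (Fin.last n) (Fin.last n) < 0)
    (hker : LinearMap.ker Ω.mulVecLin =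
      Submodule.span ℝ
        (insert (fun _ => (1 : ℝ))
          (Set.range fun j : Fin d => fun i : Fin (n + 1) => phat i j)))
    (hstressflex : ∀ q : Matrix (Fin (n + 1)) (Fin d) ℝ,
      (∀ i i' : Fin (n + 1), Gstar.Adj i i' →
        (fun k => phat i k - phat i' k) ⬝ᵥ (fun k => q i k - q i' k) = 0) →
      ∀ j : Fin d, (Ω * q) (Fin.last n) j = 0)
    (p' : Matrix (Fin (n + 1)) (Fin d) ℝ)
    (hflex : ∀ i i' : Fin (n + 1), Gstar.Adj i i' →
      (fun k => phat i k - phat i' k) ⬝ᵥ (fun k => p' i k - p' i' k) = 0)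
    (htr : Matrix.trace (p'ᵀ * Ω * p') = 0) :
    ∃ (A : Matrix (Fin d) (Fin d) ℝ) (t : Fin d → ℝ),
      ∀ i : Fin (n + 1), (fun j => p' i j) = A.mulVec (fun j => phat i j) + t :=
  stmt_9_general Gstar phat Ω hΩ hone hcorner hker hstressflex p' hflex htr
end
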